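/- Let D₁ ⊆ ℝ and D₂ ⊆ ℝ be closed, φ : ℝ² → ℝ continuously differentiable, D := {(x̄, x̃) ∈ ℝ² : x̄ ∈ D₁, φ(x̄, x̃) ∈ D₂}, and let x = (x̄, x̃) be a boundary point of D with ∂₂φ(x) ≠ 0. Let C : ℝ² → S² be differentiable at x, b : ℝ² → ℝ², and let u = (u₁, u₂) := (ū + ∂₁φ(x)·ũ, ∂₂φ(x)·ũ) with ū ∈ N¹_{D₁}(x̄), ũ ∈ N¹_{D₂}(φ(x̄, x̃)) and ũ ≠ 0 (hence u₂ ≠ 0). Then the conditions [C(x)u = 0 and ⟨u, b(x) − ½ Σ_{j=1}^2 D(Ce_j)(x)(P_C(x)e_j)⟩ ≤ 0] hold if and only if: C(x) = C₁₁(x) · [[1, −u₁/u₂], [−u₁/u₂, u₁²/u₂²]] and ⟨u, b(x)⟩ − (𝟙_{C₁₁(x) ≠ 0} / (2(u₁² + u₂²))) · ( u₁u₂ ∂_u(C₁₁ − C₂₂)(x) + (u₂² − u₁²) ∂_u C₁₂(x) ) ≤ 0, where ∂_u := u₂ ∂₁ − u₁ ∂₂ acts on the real-valued entry functions C_{ij}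 of C. -/

import Mathlib

open Matrix Set Asymptotics
open scoped RealInnerProductSpace NNReal

noncomputable section

/-- `ℝ^d` with the Euclidean inner product and norm. -/
abbrev Vec (d : ℕ) := EuclideanSpace ℝ (Fin d)

/-- real `d × d` matrices. -/
abbrev Mat (d : ℕ) := Matrix (Fin d) (Fin d) ℝ

attribute [local instance] Matrix.normedAddCommGroup Matrix.normedSpace

/-- A matrix acting on a vector of `ℝ^d`. -/
def mv {d : ℕ} (A : Mat d) (u : Vec d) : Vec d := WithLp.toLp 2 (A.mulVec u)

/-- The `j`-th canonical basis vector of `ℝ^d`. -/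
def evec {d : ℕ} (j : Fin d) : Vec d := EuclideanSpace.single j 1

/-- The first-order normal cone `N¹_D(x)`. -/
def normalCone1 {d : ℕ} (D : Set (Vec d)) (x : Vec d) : Set (Vec d) :=
  {u | ∀ ε > (0:ℝ), ∃ δ > (0:ℝ), ∀ y ∈ D, ‖y - x‖ ≤ δ → ⟪u, y - x⟫ ≤ ε * ‖y - x‖}

/-- The second-order normal cone `N²_D(x) ⊆ ℝ^d × S^d`. -/
def normalCone2 {d : ℕ} (D : Set (Vec d)) (x : Vec d) : Set (Vec d × Mat d) :=
  {p | p.2.IsSymm ∧ ∀ ε > (0:ℝ), ∃ δ > (0:ℝ), ∀ y ∈ D, ‖y - x‖ ≤ δ →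
    ⟪p.1, y - x⟫ + (1/2:ℝ) * ⟪y - x, mv p.2 (y - x)⟫ ≤ ε * ‖y - x‖^2}

/-- The first-order normal cone for subsets of `ℝ`. -/
def normalConeR (D : Set ℝ) (x : ℝ) : Set ℝ :=
  {u | ∀ ε > (0:ℝ), ∃ δ > (0:ℝ), ∀ y ∈ D, |y - x| ≤ δ → u * (y - x) ≤ ε * |y - x|}

/-- The matrix of the orthogonal projection of `ℝ^d` onto the column space (range) of `A`,
i.e. `A A⁺` with `A⁺` the Moore–Penrose pseudoinverse. -/
def projRange {d : ℕ} (A : Mat d) : Mat d :=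
  Matrix.toEuclideanLin.symm
    (((LinearMap.range (Matrix.toEuclideanLin A)).subtypeL.comp
      (Submodule.orthogonalProjectionOnto (LinearMap.range (Matrix.toEuclideanLin A)))).toLinearMap)

/-- The element of `ℝ²` with the two given coordinates. -/
def vec2 (a b : ℝ) : Vec 2 := WithLp.toLp 2 ![a, b]

/-- The Hessian matrix of `φ : ℝ^d → ℝ` at `x`. -/
def hessMat {d : ℕ} (φ : Vec d → ℝ) (x : Vec d) : Mat d :=
  Matrix.of fun i j => fderiv ℝ (fun y => fderiv ℝ φ y (evec j)) x (evec i)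

/-! For `u₂ ≠ 0`, a symmetric `2 × 2` matrix annihilates `u = (u₁, u₂)` exactly when it is a
multiple of `w wᵀ` with `w = (1, -u₁/u₂)`, so its column space is `0` or the line spanned by
`v = (u₂, -u₁) ⊥ u`. In the second case `P_C e_j = (v_j / ‖v‖²) v`, and linearity of the
derivative collapses the correction term to `∑_j D(Ce_j)(P_C e_j) = ‖v‖⁻² DC(v) v`. Finally
`DC(v) = ∂_u C` is symmetric, and `⟪u, M v⟫ = u₁u₂(M₁₁ - M₂₂) + (u₂² - u₁²) M₁₂` for symmetric `M`. -/

section Projection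

variable {d : ℕ}

lemma mv_projRange (A : Mat d) (w : Vec d) :
    mv (projRange A) w = (LinearMap.range (Matrix.toEuclideanLin A)).starProjection w := by
  change Matrix.toEuclideanLin (projRange A) w = _
  rw [projRange, LinearEquiv.apply_symm_apply]
  rfl

lemma projRange_zero : projRange (0 : Mat d) = 0 := by
  refine Matrix.toEuclideanLin.injective (LinearMap.ext fun w => ?_)
  change mv _ w = _
  simp [mv_projRange]

lemma mv_projRange_of_range_eq_span {A : Mat d} {v : Vec d}
    (h : LinearMap.range (Matrix.toEuclideanLin A) = ℝ ∙ v) (w : Vec d) :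
    mv (projRange A) w = (⟪v, w⟫ / ‖v‖ ^ 2) • v := by
  simp only [mv_projRange, h, Submodule.starProjection_singleton]
  norm_cast

lemma sum_mv_evec (M : Mat d) (v : Vec d) : ∑ j, v j • mv M (evec j) = mv M v := by
  change ∑ j, v j • Matrix.toEuclideanLin M (evec j) = Matrix.toEuclideanLin M v
  conv_rhs => rw [← (EuclideanSpace.basisFun (Fin d) ℝ).sum_repr v]
  simp [evec]

end Projection

section Derivative

variable {E : Type*} [NormedAddCommGroup E] [NormedSpace ℝ E] {d : ℕ} {C : E → Mat d} {x : E}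

lemma fderiv_matrix_entry (hC : DifferentiableAt ℝ C x) (i j : Fin d) (h : E) :
    fderiv ℝ (fun y => C y i j) x h = fderiv ℝ C x h i j := by
  rw [fderiv_apply (differentiableAt_pi.1 hC i) j, fderiv_apply hC i]
  rfl

lemma fderiv_mv (hC : DifferentiableAt ℝ C x) (w : Vec d) (h : E) :
    fderiv ℝ (fun y => mv (C y) w) x h = mv (fderiv ℝ C x h) w := by
  let L : Mat d →L[ℝ] Vec d := LinearMap.toContinuousLinearMap
    { toFun := fun A => mv A w
      map_add' := fun A B => by simp [mv, Matrix.add_mulVec]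
      map_smul' := fun c A => by simp [mv, Matrix.smul_mulVec] }
  change fderiv ℝ (L ∘ C) x h = L (fderiv ℝ C x h)
  rw [(L.hasFDerivAt.comp x hC.hasFDerivAt).fderiv]
  rfl

lemma fderiv_isSymm (hC : DifferentiableAt ℝ C x) (hS : ∀ y, (C y).IsSymm) (h : E) :
    (fderiv ℝ C x h).IsSymm := by
  refine Matrix.IsSymm.ext fun i j => ?_
  rw [← fderiv_matrix_entry hC, ← fderiv_matrix_entry hC]
  simp only [(hS _).apply i j]

end Derivative

lemma sum_fderiv_mv_projRange_of_range_eq_span {d : ℕ} {C : Vec d → Mat d} {x : Vec d}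
    (hC : DifferentiableAt ℝ C x) {v : Vec d}
    (hv : LinearMap.range (Matrix.toEuclideanLin (C x)) = ℝ ∙ v) :
    ∑ j, fderiv ℝ (fun y => mv (C y) (evec j)) x (mv (projRange (C x)) (evec j)) =
      (‖v‖ ^ 2)⁻¹ • mv (fderiv ℝ C x v) v := by
  simp only [mv_projRange_of_range_eq_span hv, map_smul]
  simp only [fderiv_mv hC, ← sum_mv_evec _ v, Finset.smul_sum, smul_smul, evec,
    EuclideanSpace.inner_single_right]
  simp [div_eq_inv_mul, mul_comm]

lemma vec2_eq_smul_add_smul (a b : ℝ) : vec2 a b = a • evec 0 + b • evec 1 := by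
  ext i
  fin_cases i <;> simp [vec2, evec]

lemma norm_vec2_sq (a b : ℝ) : ‖vec2 a b‖ ^ 2 = a ^ 2 + b ^ 2 := by
  rw [EuclideanSpace.norm_sq_eq]
  simp [vec2, Fin.sum_univ_two]

lemma fderiv_apply_vec2 {F : Type*} [NormedAddCommGroup F] [NormedSpace ℝ F] (f : Vec 2 → F)
    (x : Vec 2) (a b : ℝ) :
    fderiv ℝ f x (vec2 a b) = a • fderiv ℝ f x (evec 0) + b • fderiv ℝ f x (evec 1) := by
  rw [vec2_eq_smul_add_smul, map_add, map_smul, map_smul]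

lemma inner_vec2_mv_vec2 {M : Mat 2} (hM : M.IsSymm) (u₁ u₂ : ℝ) :
    ⟪vec2 u₁ u₂, mv M (vec2 u₂ (-u₁))⟫ =
      u₁ * u₂ * (M 0 0 - M 1 1) + (u₂ ^ 2 - u₁ ^ 2) * M 0 1 := by
  have h10 : M 1 0 = M 0 1 := hM.apply 0 1
  simp [vec2, mv, PiLp.inner_apply, Fin.sum_univ_two, h10]
  ring

lemma mv_vec2_eq_zero_iff {A : Mat 2} (hA : A.IsSymm) {u₁ u₂ : ℝ} (hu₂ : u₂ ≠ 0) :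
    mv A (vec2 u₁ u₂) = 0 ↔ A = A 0 0 • !![1, -u₁/u₂; -u₁/u₂, u₁^2/u₂^2] := by
  have h10 : A 1 0 = A 0 1 := hA.apply 0 1
  constructor
  · intro h
    have h0 := congrArg (fun v : Vec 2 => v 0) h
    have h1 := congrArg (fun v : Vec 2 => v 1) h
    simp [mv, vec2] at h0 h1
    ext i j
    fin_cases i <;> fin_cases j <;> simp <;> field_simp
    · linear_combination h0
    · linear_combination u₂ * h10 + h0
    · linear_combination u₂ * h1 - u₁ * h0 - u₁ * u₂ * h10
  · intro h
    rw [h]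
    ext i
    fin_cases i <;> simp [mv, vec2] <;> field_simp <;> ring

lemma range_toEuclideanLin_smul_rankOne {c u₁ u₂ : ℝ} (hc : c ≠ 0) (hu₂ : u₂ ≠ 0) :
    LinearMap.range (Matrix.toEuclideanLin (c • !![1, -u₁/u₂; -u₁/u₂, u₁^2/u₂^2])) =
      ℝ ∙ vec2 u₂ (-u₁) := by
  apply le_antisymm
  · rintro _ ⟨w, rfl⟩
    refine Submodule.mem_span_singleton.2 ⟨c * (w 0 - u₁ / u₂ * w 1) / u₂, ?_⟩
    ext i
    fin_cases i <;> simp [vec2, Matrix.mulVec, dotProduct, Fin.sum_univ_two] <;>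
      field_simp <;> ring
  · refine Submodule.span_singleton_le_iff_mem _ _ |>.2 ⟨(u₂ / c) • evec 0, ?_⟩
    ext i
    fin_cases i <;> simp [vec2, evec, Matrix.mulVec, dotProduct, Fin.sum_univ_two] <;>
      field_simp

lemma inner_sum_fderiv_mv_projRange {C : Vec 2 → Mat 2} {x : Vec 2}
    (hC : DifferentiableAt ℝ C x) (hS : ∀ y, (C y).IsSymm) {u₁ u₂ : ℝ} (hu₂ : u₂ ≠ 0)
    (hform : C x = C x 0 0 • !![1, -u₁/u₂; -u₁/u₂, u₁^2/u₂^2]) :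
    ⟪vec2 u₁ u₂,
        ∑ j, fderiv ℝ (fun y => mv (C y) (evec j)) x (mv (projRange (C x)) (evec j))⟫ =
      (if C x 0 0 ≠ 0 then (1:ℝ) else 0) / (u₁ ^ 2 + u₂ ^ 2) *
        (u₁ * u₂ * fderiv ℝ (fun y => C y 0 0 - C y 1 1) x (vec2 u₂ (-u₁)) +
          (u₂ ^ 2 - u₁ ^ 2) * fderiv ℝ (fun y => C y 0 1) x (vec2 u₂ (-u₁))) := by
  by_cases hc : C x 0 0 = 0
  · have hC0 : C x = 0 := by rw [hform, hc, zero_smul]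
    simp [hC0, hc, projRange_zero, mv]
  have hv : LinearMap.range (Matrix.toEuclideanLin (C x)) = ℝ ∙ vec2 u₂ (-u₁) := by
    rw [hform]
    exact range_toEuclideanLin_smul_rankOne hc hu₂
  rw [sum_fderiv_mv_projRange_of_range_eq_span hC hv, inner_smul_right,
    inner_vec2_mv_vec2 (fderiv_isSymm hC hS _), norm_vec2_sq,
    fderiv_fun_sub (differentiableAt_pi.1 (differentiableAt_pi.1 hC 0) 0)
      (differentiableAt_pi.1 (differentiableAt_pi.1 hC 1) 1)]
  simp only [FunLike.coe_sub, Pi.sub_apply, fderiv_matrix_entry hC, if_pos hc]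
  ring

theorem stmt6
    (φ : Vec 2 → ℝ)
    (x : Vec 2) (hnd : fderiv ℝ φ x (evec 1) ≠ 0)
    (C : Vec 2 → Mat 2) (hCsymm : ∀ y, (C y).IsSymm) (hCdiff : DifferentiableAt ℝ C x)
    (b : Vec 2 → Vec 2)
    (ut : ℝ)
    (hut0 : ut ≠ 0)
    (u₁ u₂ : ℝ)
    (hu₂ : u₂ = fderiv ℝ φ x (evec 1) * ut)
    (u : Vec 2) (hu : u = vec2 u₁ u₂) :
    (mv (C x) u = 0 ∧
      ⟪u, b x - (1/2 : ℝ) •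
        ∑ j, fderiv ℝ (fun y => mv (C y) (evec j)) x (mv (projRange (C x)) (evec j))⟫ ≤ 0)
    ↔
    (C x = C x 0 0 • !![1, -u₁/u₂; -u₁/u₂, u₁^2/u₂^2] ∧
      ⟪u, b x⟫ - (if C x 0 0 ≠ 0 then (1:ℝ) else 0) / (2 * (u₁^2 + u₂^2)) *
        (u₁ * u₂ * (u₂ * fderiv ℝ (fun y => C y 0 0 - C y 1 1) x (evec 0) -
                    u₁ * fderiv ℝ (fun y => C y 0 0 - C y 1 1) x (evec 1)) +
         (u₂^2 - u₁^2) * (u₂ * fderiv ℝ (fun y => C y 0 1) x (evec 0) -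
                          u₁ * fderiv ℝ (fun y => C y 0 1) x (evec 1))) ≤ 0) := by
  subst hu
  have hu₂0 : u₂ ≠ 0 := hu₂ ▸ mul_ne_zero hnd hut0
  rw [mv_vec2_eq_zero_iff (hCsymm x) hu₂0]
  refine and_congr_right fun hform => iff_of_eq (congrArg (· ≤ (0 : ℝ)) ?_)
  rw [inner_sub_right, inner_smul_right,
    inner_sum_fderiv_mv_projRange hCdiff hCsymm hu₂0 hform, fderiv_apply_vec2, fderiv_apply_vec2,
    div_mul_eq_div_div_swap]
  simp only [smul_eq_mul]
  ring
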